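/- arXiv:2510.05573 — 2 statements merged into one kernel-verified Lean document; each statement's English description precedes it below -/
import Mathlib

section
/- Let F̂: R^{d'} → R be twice differentiable and satisfy self-bounded weak convexity with parameter κ, meaning that for every v, the smallest eigenvalue of ∇²F̂(v) is at least −κ·F̂(v), and assume F̂ ≥ 0. Let w₁, w₂ ∈ R^{d'} with ‖w₁ − w₂‖ ≤ D < √(2/κ), and set τ = (1 − κD²/2)^{-1}. Then max over v on the segment [w₁, w₂] of F̂(v) is at most τ · max{F̂(w₁), F̂(w₂)}. -/
open MeasureTheory

set_option maxHeartbeats 1000000 in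
/-- Self-bounded weak convexity: if F̂ ≥ 0 is C² with ∇²F̂(v) ⪰ −κ F̂(v) I for all v,
and ‖w₁ − w₂‖ ≤ D < √(2/κ), then with τ = (1 − κD²/2)⁻¹ every point v on the segment
[w₁, w₂] satisfies F̂(v) ≤ τ max{F̂(w₁), F̂(w₂)}. -/
theorem stmt8 (d' : ℕ) (F : EuclideanSpace ℝ (Fin d') → ℝ) (κ : ℝ) (hκ : 0 < κ)
    (hsm : ContDiff ℝ 2 F) (hnn : ∀ v, 0 ≤ F v)
    (hwc : ∀ v u : EuclideanSpace ℝ (Fin d'),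
      -(κ * F v * ‖u‖ ^ 2) ≤ iteratedFDeriv ℝ 2 F v ![u, u])
    (w₁ w₂ : EuclideanSpace ℝ (Fin d')) (Dd : ℝ)
    (hD : ‖w₁ - w₂‖ ≤ Dd) (hD2 : Dd < Real.sqrt (2 / κ)) :
    ∀ α ∈ Set.Icc (0 : ℝ) 1,
      F ((1 - α) • w₁ + α • w₂) ≤ (1 - κ * Dd ^ 2 / 2)⁻¹ * max (F w₁) (F w₂) := by
  intro α hα
  set u : EuclideanSpace ℝ (Fin d') := w₂ - w₁ with hu
  have hunorm : ‖u‖ ≤ Dd := by rw [hu, norm_sub_rev]; exact hD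
  have hDd0 : 0 ≤ Dd := le_trans (norm_nonneg _) hD
  set γ : ℝ → EuclideanSpace ℝ (Fin d') := fun t => w₁ + t • u with hγ
  set g : ℝ → ℝ := fun t => F (γ t) with hg
  have hpoint : ∀ t : ℝ, (1 - t) • w₁ + t • w₂ = γ t := by
    intro t
    simp only [hγ, hu, smul_sub, sub_smul, one_smul]
    abel
  have hFd : Differentiable ℝ F := hsm.differentiable two_ne_zero
  have hGcd : ContDiff ℝ 1 (fderiv ℝ F) := hsm.fderiv_right (le_refl 2)
  have hGd : Differentiable ℝ (fderiv ℝ F) := hGcd.differentiable one_ne_zero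
  have hγd : ∀ t : ℝ, HasDerivAt γ u t := by
    intro t
    exact (((hasDerivAt_id t).smul_const u).const_add w₁).congr_deriv (one_smul ℝ u)
  have hg' : ∀ t : ℝ, HasDerivAt g (fderiv ℝ F (γ t) u) t := fun t =>
    (hFd (γ t)).hasFDerivAt.comp_hasDerivAt t (hγd t)
  have hderivg : deriv g = fun t => fderiv ℝ F (γ t) u := funext fun t => (hg' t).deriv
  have hg''fun : ∀ t : ℝ, HasDerivAt (fun s => fderiv ℝ F (γ s) u)
      (iteratedFDeriv ℝ 2 F (γ t) ![u, u]) t := by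
    intro t
    have h1 : HasDerivAt (fun s => fderiv ℝ F (γ s)) (fderiv ℝ (fderiv ℝ F) (γ t) u) t :=
      (hGd (γ t)).hasFDerivAt.comp_hasDerivAt t (hγd t)
    have h2 := h1.clm_apply (hasDerivAt_const t u)
    have h3 : iteratedFDeriv ℝ 2 F (γ t) ![u, u] = fderiv ℝ (fderiv ℝ F) (γ t) u u := by
      rw [iteratedFDeriv_two_apply]; simp
    rw [h3]
    simpa using h2
  have hγc : Continuous γ := by
    apply continuous_const.add (continuous_id.smul continuous_const)
  have hgc : Continuous g := hsm.continuous.comp hγc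
  obtain ⟨a, ha, hamax⟩ := isCompact_Icc.exists_isMaxOn (Set.nonempty_Icc.2 zero_le_one)
    hgc.continuousOn
  set M := g a with hM
  have hMle : ∀ t ∈ Set.Icc (0:ℝ) 1, g t ≤ M := fun t ht => hamax ht
  have hM0 : 0 ≤ M := hnn _
  set c := κ * Dd ^ 2 * M with hc
  have hc0 : 0 ≤ c := by positivity
  have hbound : ∀ t ∈ Set.Icc (0:ℝ) 1, -c ≤ iteratedFDeriv ℝ 2 F (γ t) ![u, u] := by
    intro t ht
    refine le_trans ?_ (hwc (γ t) u)
    have h1 : F (γ t) ≤ M := hMle t ht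
    have h2 : ‖u‖ ^ 2 ≤ Dd ^ 2 := by nlinarith [norm_nonneg u]
    have h3 := hnn (γ t)
    rw [hc, neg_le_neg_iff]
    nlinarith [mul_nonneg (mul_nonneg hκ.le (sub_nonneg.2 h1)) (sq_nonneg Dd),
      mul_nonneg (mul_nonneg hκ.le h3) (sub_nonneg.2 h2)]
  set h : ℝ → ℝ := fun t => g t + c / 2 * t ^ 2 with hh
  have hq : ∀ t : ℝ, HasDerivAt (fun s : ℝ => c / 2 * s ^ 2) (c * t) t := by
    intro t
    have := (hasDerivAt_pow 2 t).const_mul (c / 2)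
    exact this.congr_deriv (by norm_num; ring)
  have hh' : ∀ t, HasDerivAt h (fderiv ℝ F (γ t) u + c * t) t := fun t => (hg' t).add (hq t)
  have hderivh : deriv h = fun t => fderiv ℝ F (γ t) u + c * t :=
    funext fun t => (hh' t).deriv
  have hh'' : ∀ t, HasDerivAt (deriv h) (iteratedFDeriv ℝ 2 F (γ t) ![u, u] + c) t := by
    intro t
    rw [hderivh]
    have := (hg''fun t).add ((hasDerivAt_id t).const_mul c)
    exact this.congr_deriv (by simp)
  have hconv : ConvexOn ℝ (Set.Icc (0:ℝ) 1) h := by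
    apply convexOn_of_deriv2_nonneg (convex_Icc 0 1)
    · exact (hgc.add (continuous_const.mul (continuous_pow 2))).continuousOn
    · exact fun t ht => (hh' t).differentiableAt.differentiableWithinAt
    · exact fun t ht => (hh'' t).differentiableAt.differentiableWithinAt
    · intro t ht
      rw [interior_Icc] at ht
      have e2 : deriv^[2] h t = deriv (deriv h) t := rfl
      rw [e2, (hh'' t).deriv]
      have := hbound t (Set.Ioo_subset_Icc_self ht)
      linarith
  have key : h a ≤ max (h 0) (h 1) := by
    apply hconv.le_on_segment (Set.left_mem_Icc.2 zero_le_one) (Set.right_mem_Icc.2 zero_le_one)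
    rwa [segment_eq_Icc zero_le_one]
  have h0 : h 0 = g 0 := by simp [hh]
  have h1 : h 1 = g 1 + c / 2 := by simp [hh]
  have hg0 : g 0 = F w₁ := by simp [hg, hγ]
  have hg1 : g 1 = F w₂ := by
    have : γ 1 = w₂ := by simp [hγ, hu]
    simp [hg, this]
  have hMa : M ≤ max (F w₁) (F w₂) + c / 2 := by
    have hMh : M ≤ h a := by
      rw [hh]
      nlinarith [sq_nonneg a]
    have hmax : max (h 0) (h 1) ≤ max (F w₁) (F w₂) + c / 2 := by
      rw [h0, h1, hg0, hg1]
      apply max_le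
      · linarith [le_max_left (F w₁) (F w₂)]
      · linarith [le_max_right (F w₁) (F w₂)]
    linarith
  have hDsq : Dd ^ 2 < 2 / κ := (Real.lt_sqrt hDd0).1 hD2
  have hden : 0 < 1 - κ * Dd ^ 2 / 2 := by
    have : Dd ^ 2 * κ < 2 := (lt_div_iff₀ hκ).1 hDsq
    nlinarith
  have hfinal : M ≤ (1 - κ * Dd ^ 2 / 2)⁻¹ * max (F w₁) (F w₂) := by
    rw [le_inv_mul_iff₀ hden]
    rw [hc] at hMa
    have : (1 - κ * Dd ^ 2 / 2) * M = M - κ * Dd ^ 2 * M / 2 := by ring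
    linarith
  calc F ((1 - α) • w₁ + α • w₂) = g α := by rw [hpoint α]
    _ ≤ M := hMle α hα
    _ ≤ _ := hfinal
end

section
/- Consider gradient descent iterates w_{t+1}^i = w_t^i − (η/(√m · n)) ∑_j a_i ⟨w_t^i, x_j⟩ x_j y_j with ‖x_j‖ ≤ 1, |a_i| = 1, and m ≥ η². Then the per-neuron distance from initialization satisfies ‖w_t^i − w_0^i‖ ≤ C t η/√m for all t such that t η/√m ≤ 1, for some absolute constant C (depending on max_j |⟨w_0^i, x_j⟩|). -/
/-- For the per-neuron GD dynamics of the two-layer quadratic network,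
w_{t+1} = w_t − (η/(√m n)) ∑_j a ⟨w_t, x_j⟩ y_j x_j with ‖x_j‖ ≤ 1, |y_j| ≤ 1, |a| = 1,
and m ≥ η², there is a constant C > 0 (depending on max_j |⟨w₀, x_j⟩|) such that
‖w_t − w₀‖ ≤ C t η/√m whenever t η/√m ≤ 1. -/
theorem stmt16 (d n : ℕ) (η m : ℝ) (hη : 0 < η) (hm : η ^ 2 ≤ m)
    (a : ℝ) (ha : |a| = 1)
    (x : Fin n → EuclideanSpace ℝ (Fin d)) (hx : ∀ j, ‖x j‖ ≤ 1)
    (y : Fin n → ℝ) (hy : ∀ j, |y j| ≤ 1)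
    (w : ℕ → EuclideanSpace ℝ (Fin d))
    (hrec : ∀ t : ℕ, w (t + 1) = w t -
      (η / (Real.sqrt m * n)) • ∑ j, (a * (inner ℝ (w t) (x j) : ℝ) * y j) • x j) :
    ∃ C : ℝ, 0 < C ∧ ∀ t : ℕ,
      (t : ℝ) * η / Real.sqrt m ≤ 1 → ‖w t - w 0‖ ≤ C * t * η / Real.sqrt m := by
  set s := Real.sqrt m with hs
  have hηs : η ≤ s := by
    have := Real.sqrt_le_sqrt hm
    rwa [Real.sqrt_sq hη.le] at this
  have hs0 : (0 : ℝ) < s := lt_of_lt_of_le hη hηs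
  set ε := η / s with hε
  have hε0 : 0 ≤ ε := div_nonneg hη.le hs0.le
  -- per-step bound
  have hstep : ∀ t, ‖w (t + 1) - w t‖ ≤ ε * ‖w t‖ := by
    intro t
    rw [hrec t, sub_sub_cancel_left, norm_neg, norm_smul]
    have hsum : ‖∑ j, (a * (inner ℝ (w t) (x j) : ℝ) * y j) • x j‖ ≤ (n : ℝ) * ‖w t‖ := by
      calc ‖∑ j, (a * (inner ℝ (w t) (x j) : ℝ) * y j) • x j‖
          ≤ ∑ j, ‖(a * (inner ℝ (w t) (x j) : ℝ) * y j) • x j‖ := norm_sum_le _ _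
        _ ≤ ∑ _j : Fin n, ‖w t‖ := by
            apply Finset.sum_le_sum
            intro j _
            rw [norm_smul]
            have h1 : |(inner ℝ (w t) (x j) : ℝ)| ≤ ‖w t‖ * ‖x j‖ := abs_real_inner_le_norm _ _
            have h2 : ‖w t‖ * ‖x j‖ ≤ ‖w t‖ := by
              nlinarith [norm_nonneg (w t), norm_nonneg (x j), hx j]
            have h3 : ‖a * (inner ℝ (w t) (x j) : ℝ) * y j‖ ≤ ‖w t‖ := by
              rw [Real.norm_eq_abs, abs_mul, abs_mul, ha, one_mul]
              nlinarith [abs_nonneg (y j), abs_nonneg ((inner ℝ (w t) (x j) : ℝ)), hy j,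
                norm_nonneg (w t)]
            calc ‖a * (inner ℝ (w t) (x j) : ℝ) * y j‖ * ‖x j‖
                ≤ ‖w t‖ * 1 := by
                  apply mul_le_mul h3 (hx j) (norm_nonneg _) (norm_nonneg _)
              _ = ‖w t‖ := mul_one _
        _ = (n : ℝ) * ‖w t‖ := by simp [Finset.sum_const]
    rcases Nat.eq_zero_or_pos n with hn | hn
    · subst hn
      simp [mul_nonneg hε0 (norm_nonneg (w t))]
    · have hn0 : (0 : ℝ) < n := by exact_mod_cast hn
      have hcoef : ‖η / (s * n)‖ = η / (s * n) := by
        rw [Real.norm_eq_abs, abs_of_nonneg (div_nonneg hη.le (by positivity))]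
      rw [hcoef]
      calc η / (s * n) * ‖∑ j, (a * (inner ℝ (w t) (x j) : ℝ) * y j) • x j‖
          ≤ η / (s * n) * ((n : ℝ) * ‖w t‖) := by
            apply mul_le_mul_of_nonneg_left hsum (div_nonneg hη.le (by positivity))
        _ = ε * ‖w t‖ := by rw [hε]; field_simp
  -- main induction
  have key : ∀ t : ℕ, ‖w t - w 0‖ ≤ ‖w 0‖ * ((t : ℝ) * ε) * (1 + ε) ^ t := by
    intro t
    induction t with
    | zero => simp
    | succ t ih =>
      have h1 : ‖w (t + 1) - w 0‖ ≤ ‖w (t + 1) - w t‖ + ‖w t - w 0‖ := by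
        have := norm_add_le (w (t + 1) - w t) (w t - w 0)
        simpa using this
      have h2 : ‖w t‖ ≤ ‖w 0‖ + ‖w t - w 0‖ := by
        have := norm_sub_le (w t - w 0) (- w 0)
        calc ‖w t‖ = ‖(w t - w 0) + w 0‖ := by rw [sub_add_cancel]
          _ ≤ ‖w t - w 0‖ + ‖w 0‖ := norm_add_le _ _
          _ = ‖w 0‖ + ‖w t - w 0‖ := by ring
      have hpow1 : (1 : ℝ) ≤ (1 + ε) ^ (t + 1) := one_le_pow₀ (by linarith)
      have hpow0 : (0 : ℝ) ≤ (1 + ε) ^ t := by positivity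
      have : ‖w (t + 1) - w 0‖ ≤ ε * (‖w 0‖ + ‖w t - w 0‖) + ‖w t - w 0‖ := by
        have := hstep t
        nlinarith [norm_nonneg (w t), hε0]
      have hpows : (1 + ε) ^ (t + 1) = (1 + ε) * (1 + ε) ^ t := by ring
      have hA : (1 + ε) * ‖w t - w 0‖ ≤ ‖w 0‖ * ((t : ℝ) * ε) * (1 + ε) ^ (t + 1) := by
        calc (1 + ε) * ‖w t - w 0‖ ≤ (1 + ε) * (‖w 0‖ * ((t : ℝ) * ε) * (1 + ε) ^ t) :=
              mul_le_mul_of_nonneg_left ih (by linarith)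
          _ = ‖w 0‖ * ((t : ℝ) * ε) * (1 + ε) ^ (t + 1) := by rw [hpows]; ring
      have hB : ε * ‖w 0‖ ≤ ‖w 0‖ * ε * (1 + ε) ^ (t + 1) := by
        have := mul_le_mul_of_nonneg_left hpow1 (mul_nonneg hε0 (norm_nonneg (w 0)))
        nlinarith
      push_cast
      nlinarith [this, hA, hB]
  -- choose constant
  refine ⟨3 * ‖w 0‖ + 1, by positivity, ?_⟩
  intro t ht
  have htε : (t : ℝ) * ε ≤ 1 := by rwa [hε, ← mul_div_assoc]
  have hexp : (1 + ε) ^ t ≤ 3 := by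
    have h1 : (1 + ε : ℝ) ≤ Real.exp ε := by
      have := Real.add_one_le_exp ε; linarith
    have h2 : (1 + ε) ^ t ≤ Real.exp ε ^ t :=
      pow_le_pow_left₀ (by linarith) h1 t
    have h3 : Real.exp ε ^ t = Real.exp ((t : ℝ) * ε) := by
      rw [← Real.exp_nat_mul]
    have h4 : Real.exp ((t : ℝ) * ε) ≤ Real.exp 1 := Real.exp_le_exp.mpr htε
    have h5 : Real.exp 1 ≤ 3 := by
      have := Real.exp_one_lt_d9; linarith
    calc (1 + ε) ^ t ≤ Real.exp ε ^ t := h2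
      _ = Real.exp ((t : ℝ) * ε) := h3
      _ ≤ 3 := le_trans h4 h5
  have := key t
  have htε0 : 0 ≤ (t : ℝ) * ε := mul_nonneg (Nat.cast_nonneg t) hε0
  have hgoal : ‖w t - w 0‖ ≤ (3 * ‖w 0‖ + 1) * ((t : ℝ) * ε) := by
    nlinarith [mul_le_mul_of_nonneg_left hexp (mul_nonneg (norm_nonneg (w 0)) htε0),
      norm_nonneg (w 0)]
  calc ‖w t - w 0‖ ≤ (3 * ‖w 0‖ + 1) * ((t : ℝ) * ε) := hgoal
    _ = (3 * ‖w 0‖ + 1) * t * η / s := by rw [hε]; ring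
end
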